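/- Let (E, ℋ) be a Steiner system of type (5,6,12) and let M be its associated matroid of rank 6, whose bases are the 6-element subsets of E contained in no block. Then P_M(t) = 1 + 120t + 429t². -/

import Mathlib

/-!
The matroid `M` of a Steiner system `S(5, 6, 12)` is paving: sets of size at most `5` are
independent, blocks have rank `5`, and all other sets of size at least `6` span `M`. For
`|S| = i ≤ 5`, in `Z (M ⧸ S) = ∑_{S ⊆ U} t ^ (rk U - i) P (M ⧸ U)` a spanning `U ≠ E` contributes
nothing (`M ⧸ U` has rank `0`), a block contributes `t ^ (5 - i)` (`M ⧸ U` has rank `1`), `U = E`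
contributes `t ^ (6 - i)`, and the sets of size at most `5` contribute terms known by downward
induction on `i`. As `Z (M ⧸ S)` is palindromic of degree `6 - i` and
`deg P (M ⧸ S) < (6 - i) / 2`, this determines `P (M ⧸ S)`; at `S = ∅` it is
`1 + 120 t + 429 t²`.
-/

open Polynomial Matroid

namespace KLPaper

variable {α : Type} [Fintype α]

/-- The contraction `M ⧸ C` of a set `C` in a matroid `M`, defined (as is standard,
see e.g. Oxley, Prop. 3.1.1) as the dual of the deletion of `C` from the dual matroid,
where deletion of `C` is restriction to `M.E \ C`.  Its ground set is `M.E \ C`. -/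
noncomputable def contract (M : Matroid α) (C : Set α) : Matroid α :=
  (M✶ ↾ (M.E \ C))✶

scoped infixl:75 " ⧸ " => KLPaper.contract

/-- The rank `rk M S` of a set `S` in a matroid `M`: the largest cardinality of an
independent subset of `S`. -/
noncomputable def rk (M : Matroid α) (S : Set α) : ℕ :=
  sSup {n | ∃ I, I ⊆ S ∧ M.Indep I ∧ I.ncard = n}

/-- The rank of a matroid: the rank of its ground set. -/
noncomputable def rank (M : Matroid α) : ℕ := rk M M.E

/-- A circuit of a matroid: a minimal dependent set, i.e. a dependent subset of the
ground set all of whose proper subsets are independent. -/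
def IsCircuit (M : Matroid α) (C : Set α) : Prop :=
  M.Dep C ∧ ∀ D ⊂ C, M.Indep D

/-- A hyperplane of a matroid: a maximal proper flat. -/
def IsHyperplane (M : Matroid α) (H : Set α) : Prop :=
  M.IsFlat H ∧ H ≠ M.E ∧ ∀ F, M.IsFlat F → H ⊂ F → F = M.E

/-- A stressed hyperplane of a matroid `M` of rank `k`: a hyperplane `H` such that every
`k`-element subset of `H` is a circuit of `M`. -/
def Stressed (M : Matroid α) (H : Set α) : Prop :=
  IsHyperplane M H ∧ ∀ C ⊆ H, C.ncard = rank M → IsCircuit M C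

/-- `Mt` is the relaxation of `M` at the stressed hyperplane `H`: the matroid on the same
ground set whose bases are exactly the bases of `M` together with all `(rank M)`-element
subsets of `H`. -/
def IsRelaxation (M Mt : Matroid α) (H : Set α) : Prop :=
  Mt.E = M.E ∧ ∀ B : Set α, Mt.IsBase B ↔ (M.IsBase B ∨ (B ⊆ H ∧ B.ncard = rank M))

/-- The characterization of the Kazhdan–Lusztig polynomials `P_M` and the `Z`-polynomials
`Z_M` of matroids (on a fixed finite type): (i) both equal `1` on matroids with empty
ground set; (ii) `2 · deg P_M < rk M` when the ground set is nonempty (the zero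
polynomial being allowed); (iii) `Z_M` is palindromic of degree `rk M`;
(iv) `Z_M = Σ_{S ⊆ E} t^{rk S} · P_{M ⧸ S}`, the sum over all subsets `S` of `E`. -/
def PZaxioms (P Z : Matroid α → Polynomial ℤ) : Prop :=
  (∀ M : Matroid α, M.E = ∅ → P M = 1 ∧ Z M = 1) ∧
  (∀ M : Matroid α, M.E ≠ ∅ → (P M = 0 ∨ 2 * (P M).natDegree < rank M)) ∧
  (∀ M : Matroid α, (Z M).natDegree ≤ rank M ∧
      ∀ i ≤ rank M, (Z M).coeff i = (Z M).coeff (rank M - i)) ∧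
  (∀ M : Matroid α,
      Z M = ∑ S ∈ M.E.toFinite.toFinset.powerset,
        X ^ (rk M (S : Set α)) * P (M ⧸ (S : Set α)))

end KLPaper

lemma Polynomial.eq_zero_of_coeff_symm {p : ℤ[X]} {r : ℕ} (hp : 2 * p.natDegree < r)
    (hsymm : ∀ k ≤ r, p.coeff k = p.coeff (r - k)) : p = 0 := by
  ext k
  rw [coeff_zero]
  by_cases hk : r ≤ 2 * k
  · exact coeff_eq_zero_of_natDegree_lt (by omega)
  · rw [hsymm k (by omega)]
    exact coeff_eq_zero_of_natDegree_lt (by omega)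

namespace KLPaper

section Rank

variable {α : Type} {M : Matroid α} {I X C T : Set α}

lemma contract_eq_contract (M : Matroid α) (C : Set α) : contract M C = M ／ C := rfl

lemma rank_def (M : Matroid α) : rank M = rk M M.E := rfl

lemma rk_eq_ncard (hIX : I ⊆ X) (hI : M.Indep I)
    (hmax : ∀ J ⊆ X, M.Indep J → J.ncard ≤ I.ncard) : rk M X = I.ncard :=
  IsGreatest.csSup_eq ⟨⟨I, hIX, hI, rfl⟩, by rintro _ ⟨J, hJX, hJ, rfl⟩; exact hmax J hJX hJ⟩

variable [Finite α]

lemma rk_eq_ncard_of_isBasis' (hI : M.IsBasis' I X) : rk M X = I.ncard := by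
  refine rk_eq_ncard hI.subset hI.indep fun J hJX hJ ↦ ?_
  obtain ⟨K, hK, hJK⟩ := hJ.subset_isBasis'_of_subset hJX
  rw [hI.isBase_restrict.ncard_eq_ncard_of_isBase hK.isBase_restrict]
  exact Set.ncard_le_ncard hJK

lemma rk_eq_ncard_of_indep (hI : M.Indep I) : rk M I = I.ncard :=
  rk_eq_ncard_of_isBasis' hI.isBasis_self.isBasis'

lemma rk_empty (M : Matroid α) : rk M ∅ = 0 := by
  simpa using rk_eq_ncard_of_indep M.empty_indep

lemma rk_contract_add_rk (hTC : Disjoint T C) : rk (contract M C) T + rk M C = rk M (C ∪ T) := by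
  obtain ⟨I, hI⟩ := M.exists_isBasis' C
  obtain ⟨K, hK, hIK⟩ :=
    hI.indep.subset_isBasis'_of_subset (hI.subset.trans Set.subset_union_left)
  have hKC : K ∩ C = I :=
    (hI.eq_of_subset_indep (hK.indep.subset Set.inter_subset_left)
      (Set.subset_inter hIK hI.subset) Set.inter_subset_right).symm
  have hKT : (contract M C).IsBasis' (K \ C) T := by
    have h := hK.contract_isBasis' hI (hK.indep.subset (Set.union_subset Set.sdiff_subset hIK))
    rw [Set.union_sdiff_cancel_left hTC.symm.inter_eq.subset] at h
    exact h
  rw [rk_eq_ncard_of_isBasis' hKT, rk_eq_ncard_of_isBasis' hI, rk_eq_ncard_of_isBasis' hK, ← hKC,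
    add_comm, Set.ncard_inter_add_ncard_sdiff_eq_ncard]

lemma rank_contract_add_rk (hC : C ⊆ M.E) : rank (contract M C) + rk M C = rank M := by
  rw [rank_def, rank_def, ← Set.union_sdiff_cancel hC]
  exact rk_contract_add_rk Set.disjoint_sdiff_left

end Rank

section Powerset

variable {α : Type} [Finite α] {E S : Set α}

lemma mem_powersetCard_sdiff {T : Finset α} {j : ℕ} :
    T ∈ (E \ S).toFinite.toFinset.powersetCard j ↔ (T : Set α) ⊆ E \ S ∧ T.card = j := by
  rw [Finset.mem_powersetCard, Set.Finite.subset_toFinset]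

lemma union_subset_of_mem_powersetCard (hS : S ⊆ E) {T : Finset α} {j : ℕ}
    (hT : T ∈ (E \ S).toFinite.toFinset.powersetCard j) : S ∪ T ⊆ E :=
  Set.union_subset hS ((mem_powersetCard_sdiff.mp hT).1.trans Set.sdiff_subset)

lemma ncard_union_of_mem_powersetCard {T : Finset α} {j : ℕ}
    (hT : T ∈ (E \ S).toFinite.toFinset.powersetCard j) : (S ∪ T).ncard = S.ncard + j := by
  rw [mem_powersetCard_sdiff] at hT
  rw [Set.ncard_union_eq (Set.disjoint_of_subset_right hT.1 Set.disjoint_sdiff_right),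
    Set.ncard_coe_finset, hT.2]

end Powerset

structure IsSteinerSystem {α : Type} (E : Set α) (Blocks : Set (Set α)) (d k n : ℕ) : Prop where
  ncard_eq : E.ncard = n
  subset_of_mem : ∀ Bl ∈ Blocks, Bl ⊆ E
  ncard_of_mem : ∀ Bl ∈ Blocks, Bl.ncard = k
  existsUnique : ∀ D ⊆ E, D.ncard = d → ∃! Bl, Bl ∈ Blocks ∧ D ⊆ Bl

namespace IsSteinerSystem

variable {α : Type} [Finite α] {E S : Set α} {Blocks : Set (Set α)} {d k n : ℕ}

lemma card_toFinset_sdiff (h : IsSteinerSystem E Blocks d k n) (hS : S ⊆ E) :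
    (E \ S).toFinite.toFinset.card = n - S.ncard := by
  rw [← Set.ncard_eq_toFinset_card _ (E \ S).toFinite, Set.ncard_sdiff hS, h.ncard_eq]

open Classical in
/-- Double counting of the pairs `T' ⊆ T`: each `d`-set `S ∪ T'` lies in exactly one
block `S ∪ T`. -/
theorem card_filter_union_mem_mul (h : IsSteinerSystem E Blocks d k n) (hS : S ⊆ E)
    (hSd : S.ncard ≤ d) :
    (((E \ S).toFinite.toFinset.powersetCard (k - S.ncard)).filter
      (fun T : Finset α ↦ S ∪ (T : Set α) ∈ Blocks)).card *
      (k - S.ncard).choose (d - S.ncard) = (n - S.ncard).choose (d - S.ncard) := by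
  have hcount := Finset.card_mul_eq_card_mul (fun (T : Finset α) (T' : Finset α) ↦ T' ⊆ T)
    (s := ((E \ S).toFinite.toFinset.powersetCard (k - S.ncard)).filter
      (fun T : Finset α ↦ S ∪ (T : Set α) ∈ Blocks))
    (t := (E \ S).toFinite.toFinset.powersetCard (d - S.ncard))
    (m := (k - S.ncard).choose (d - S.ncard)) (n := 1) ?_ ?_
  · rwa [Finset.card_powersetCard, h.card_toFinset_sdiff hS, mul_one] at hcount
  · intro T hT
    rw [Finset.mem_filter, mem_powersetCard_sdiff] at hT
    have hsub : Finset.bipartiteAbove (fun (T T' : Finset α) ↦ T' ⊆ T)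
        ((E \ S).toFinite.toFinset.powersetCard (d - S.ncard)) T =
          T.powersetCard (d - S.ncard) := by
      ext T'
      rw [Finset.mem_bipartiteAbove, mem_powersetCard_sdiff, Finset.mem_powersetCard]
      exact ⟨fun ⟨⟨_, hc⟩, hT'T⟩ ↦ ⟨hT'T, hc⟩,
        fun ⟨hT'T, hc⟩ ↦ ⟨⟨(Finset.coe_subset.mpr hT'T).trans hT.1.1, hc⟩, hT'T⟩⟩
    rw [hsub, Finset.card_powersetCard, hT.1.2]
  · intro T' hT'
    have hD := union_subset_of_mem_powersetCard hS hT'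
    have hDd : (S ∪ T').ncard = d := by rw [ncard_union_of_mem_powersetCard hT']; omega
    obtain ⟨Bl, ⟨hBl, hDBl⟩, huniq⟩ := h.existsUnique _ hD hDd
    have hSBl : S ⊆ Bl := Set.subset_union_left.trans hDBl
    rw [Finset.card_eq_one]
    refine ⟨(Bl \ S).toFinite.toFinset, Finset.eq_singleton_iff_unique_mem.mpr ⟨?_, ?_⟩⟩
    · simp only [Finset.mem_bipartiteBelow, Finset.mem_filter, mem_powersetCard_sdiff,
        Set.Finite.coe_toFinset, Set.union_sdiff_cancel hSBl, Set.Finite.subset_toFinset]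
      refine ⟨⟨⟨Set.sdiff_subset_sdiff_left (h.subset_of_mem Bl hBl), ?_⟩, hBl⟩,
        Set.subset_sdiff.mpr ⟨Set.subset_union_right.trans hDBl, ?_⟩⟩
      · rw [← Set.ncard_eq_toFinset_card _ (Bl \ S).toFinite, Set.ncard_sdiff hSBl,
          h.ncard_of_mem Bl hBl]
      · exact Set.disjoint_of_subset_left (mem_powersetCard_sdiff.mp hT').1
          Set.disjoint_sdiff_left
    · intro T hT
      simp only [Finset.mem_bipartiteBelow, Finset.mem_filter, mem_powersetCard_sdiff] at hT
      obtain ⟨⟨⟨hTS, -⟩, hSTB⟩, hT'T⟩ := hT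
      have hST := huniq _ ⟨hSTB, Set.union_subset_union_right S (Finset.coe_subset.mpr hT'T)⟩
      rw [← Finset.coe_inj, Set.Finite.coe_toFinset, ← hST, Set.union_sdiff_left,
        (Set.subset_sdiff.mp hTS).2.sdiff_eq_left]

end IsSteinerSystem

structure IsSteinerMatroid {α : Type} (M : Matroid α) (Blocks : Set (Set α)) (d n : ℕ) : Prop where
  isSteinerSystem : IsSteinerSystem M.E Blocks d (d + 1) n
  isBase_iff : ∀ B, M.IsBase B ↔ B ⊆ M.E ∧ B.ncard = d + 1 ∧ ∀ Bl ∈ Blocks, ¬B ⊆ Bl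

namespace IsSteinerMatroid

variable {α : Type} {M : Matroid α} {Blocks : Set (Set α)} {d n : ℕ} {Bl D I X : Set α}

lemma insert_notMem (h : IsSteinerMatroid M Blocks d n) (hD : D ⊆ M.E) (hDd : D.ncard = d)
    (hBl : Bl ∈ Blocks) (hDBl : D ⊆ Bl) {e : α} (he : e ∉ Bl) : insert e D ∉ Blocks := by
  intro heD
  obtain ⟨_, _, huniq⟩ := h.isSteinerSystem.existsUnique D hD hDd
  apply he
  rw [huniq _ ⟨hBl, hDBl⟩, ← huniq _ ⟨heD, Set.subset_insert e D⟩]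
  exact Set.mem_insert e D

variable [Finite α]

lemma ncard_le_of_indep (h : IsSteinerMatroid M Blocks d n) (hI : M.Indep I) :
    I.ncard ≤ d + 1 := by
  obtain ⟨B, hB, hIB⟩ := hI.exists_isBase_superset
  exact ((h.isBase_iff B).mp hB).2.1 ▸ Set.ncard_le_ncard hIB

lemma eq_of_subset_of_mem (h : IsSteinerMatroid M Blocks d n) (hBl : Bl ∈ Blocks) (hXBl : X ⊆ Bl)
    (hX : d + 1 ≤ X.ncard) : X = Bl :=
  Set.eq_of_subset_of_ncard_le hXBl (by rwa [h.isSteinerSystem.ncard_of_mem Bl hBl])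

lemma not_indep_of_mem (h : IsSteinerMatroid M Blocks d n) (hBl : Bl ∈ Blocks) : ¬M.Indep Bl := by
  intro hI
  obtain ⟨B, hB, hBlB⟩ := hI.exists_isBase_superset
  obtain ⟨-, hB1, hBnot⟩ := (h.isBase_iff B).mp hB
  exact hBnot Bl hBl
    (Set.eq_of_subset_of_ncard_le hBlB (by rw [hB1, h.isSteinerSystem.ncard_of_mem Bl hBl])).ge

lemma indep_of_ncard_eq (h : IsSteinerMatroid M Blocks d n) (hI : I ⊆ M.E)
    (hI1 : I.ncard = d + 1) (hIB : I ∉ Blocks) : M.Indep I :=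
  IsBase.indep <| (h.isBase_iff I).mpr
    ⟨hI, hI1, fun _ hBl hIBl ↦ hIB (h.eq_of_subset_of_mem hBl hIBl hI1.ge ▸ hBl)⟩

lemma indep_of_ncard_le (h : IsSteinerMatroid M Blocks d n) (hn : d + 2 ≤ n) (hI : I ⊆ M.E)
    (hId : I.ncard ≤ d) : M.Indep I := by
  have hS := h.isSteinerSystem
  obtain ⟨D, hID, hDE, hDd⟩ :=
    Set.exists_subsuperset_card_eq hI hId (by rw [hS.ncard_eq]; omega)
  obtain ⟨Bl, ⟨hBl, hDBl⟩, -⟩ := hS.existsUnique D hDE hDd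
  obtain ⟨e, heE, heBl⟩ : (M.E \ Bl).Nonempty := by
    rw [← Set.ncard_pos, Set.ncard_sdiff (hS.subset_of_mem Bl hBl), hS.ncard_eq,
      hS.ncard_of_mem Bl hBl]
    omega
  have heD : e ∉ D := fun heD ↦ heBl (hDBl heD)
  refine (h.indep_of_ncard_eq (Set.insert_subset heE hDE) ?_
    (h.insert_notMem hDE hDd hBl hDBl heBl)).subset (hID.trans (Set.subset_insert e D))
  rw [Set.ncard_insert_of_notMem heD, hDd]

lemma rk_eq_ncard_of_ncard_le (h : IsSteinerMatroid M Blocks d n) (hn : d + 2 ≤ n)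
    (hX : X ⊆ M.E) (hXd : X.ncard ≤ d) : rk M X = X.ncard :=
  rk_eq_ncard_of_indep (h.indep_of_ncard_le hn hX hXd)

lemma rk_eq_of_mem (h : IsSteinerMatroid M Blocks d n) (hn : d + 2 ≤ n) (hBl : Bl ∈ Blocks) :
    rk M Bl = d := by
  have hBlE := h.isSteinerSystem.subset_of_mem Bl hBl
  obtain ⟨D, hDBl, hDd⟩ := Set.exists_subset_card_eq (s := Bl) (n := d)
    (by rw [h.isSteinerSystem.ncard_of_mem Bl hBl]; omega)
  rw [← hDd]
  refine rk_eq_ncard hDBl (h.indep_of_ncard_le hn (hDBl.trans hBlE) hDd.le) fun J hJBl hJ ↦ ?_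
  by_contra! hJd
  exact h.not_indep_of_mem hBl (h.eq_of_subset_of_mem hBl hJBl (by omega) ▸ hJ)

lemma rk_eq_of_notMem (h : IsSteinerMatroid M Blocks d n) (hX : X ⊆ M.E)
    (hXd : d + 1 ≤ X.ncard) (hXB : X ∉ Blocks) : rk M X = d + 1 := by
  have hS := h.isSteinerSystem
  obtain ⟨D, hDX, hDd⟩ := Set.exists_subset_card_eq (s := X) (n := d) (by omega)
  obtain ⟨Bl, ⟨hBl, hDBl⟩, -⟩ := hS.existsUnique D (hDX.trans hX) hDd
  obtain ⟨e, heX, heBl⟩ : (X \ Bl).Nonempty := by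
    rw [Set.nonempty_iff_ne_empty, Ne, Set.sdiff_eq_empty]
    exact fun hXBl ↦ hXB (h.eq_of_subset_of_mem hBl hXBl hXd ▸ hBl)
  have heD : e ∉ D := fun heD ↦ heBl (hDBl heD)
  have hcard : (insert e D).ncard = d + 1 := by rw [Set.ncard_insert_of_notMem heD, hDd]
  rw [← hcard]
  exact rk_eq_ncard (Set.insert_subset heX hDX)
    (h.indep_of_ncard_eq (Set.insert_subset (hX heX) (hDX.trans hX)) hcard
      (h.insert_notMem (hDX.trans hX) hDd hBl hDBl heBl))
    fun J _ hJ ↦ hcard ▸ h.ncard_le_of_indep hJ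

lemma rank_eq (h : IsSteinerMatroid M Blocks d n) (hn : d + 2 ≤ n) : rank M = d + 1 := by
  have hE := h.isSteinerSystem.ncard_eq
  refine h.rk_eq_of_notMem subset_rfl (by omega) fun hEB ↦ ?_
  have := h.isSteinerSystem.ncard_of_mem _ hEB
  omega

end IsSteinerMatroid

namespace PZaxioms

variable {α : Type} [Fintype α] {P Z : Matroid α → ℤ[X]} {M : Matroid α} {U : Set α}

lemma P_contract_ground (hPZ : PZaxioms P Z) (M : Matroid α) : P (contract M M.E) = 1 :=
  (hPZ.1 _ Set.sdiff_self).1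

lemma P_eq_of_Z_eq_add (hPZ : PZaxioms P Z) {Q R : ℤ[X]} (hZ : Z M = P M + R)
    (hQ : 2 * Q.natDegree < rank M) (hQR : reflect (rank M) (Q + R) = Q + R) : P M = Q := by
  have hE : M.E ≠ ∅ := fun hE ↦ by
    rw [rank_def, hE, rk_empty] at hQ
    omega
  have hP : 2 * (P M).natDegree < rank M := by
    rcases hPZ.2.1 M hE with hP | hP
    · rw [hP, natDegree_zero]
      omega
    · exact hP
  rw [← sub_eq_zero]
  refine Polynomial.eq_zero_of_coeff_symm (r := rank M) ?_ fun k hk ↦ ?_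
  · have := natDegree_sub_le (P M) Q
    omega
  · have hZk := (hPZ.2.2.1 M).2 k hk
    have hQRk : (Q + R).coeff k = (Q + R).coeff (rank M - k) := by
      rw [← revAt_le hk, ← coeff_reflect, hQR]
    rw [hZ, coeff_add, coeff_add] at hZk
    rw [coeff_add, coeff_add] at hQRk
    rw [coeff_sub, coeff_sub]
    linarith

lemma Z_contract (hPZ : PZaxioms P Z) (M : Matroid α) (C : Set α) :
    Z (contract M C) = ∑ T ∈ (M.E \ C).toFinite.toFinset.powerset,
      X ^ (rk M (C ∪ T) - rk M C) * P (contract M (C ∪ T)) := by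
  rw [hPZ.2.2.2]
  refine Finset.sum_congr rfl fun T hT ↦ ?_
  rw [Finset.mem_powerset, ← Finset.coe_subset, Set.Finite.coe_toFinset] at hT
  have hrk := rk_contract_add_rk (M := M) (Set.disjoint_of_subset_left hT Set.disjoint_sdiff_left)
  rw [contract_eq_contract, contract_eq_contract, Matroid.contract_contract, ← hrk,
    Nat.add_sub_cancel]
  rfl

lemma P_contract_eq_zero (hPZ : PZaxioms P Z) (hU : U ⊆ M.E) (hUE : U ≠ M.E)
    (hrk : rk M U = rank M) : P (contract M U) = 0 := by
  have hground : (contract M U).E ≠ ∅ := by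
    show M.E \ U ≠ ∅
    exact fun h ↦ hUE (hU.antisymm (Set.sdiff_eq_empty.mp h))
  have := rank_contract_add_rk hU
  exact (hPZ.2.1 _ hground).resolve_right (by omega)

end PZaxioms

/-- In the matroid `M` of a Steiner system of type `(d, d + 1, n)`, with `|S| = i ≤ d` and
`P (M ⧸ U) = g |U|` for `i < |U| ≤ d`: the sum of `t ^ (rk (S ∪ T) - i) * P (M ⧸ (S ∪ T))` over
the `j`-subsets `T` of `E \ S`, `j > 0`. Of the `(n - i).choose (d - i)` sets of size `d`
through `S`, exactly `d + 1 - i` lie in each block through `S`. -/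
noncomputable def steinerZTerm (d n : ℕ) (g : ℕ → ℤ[X]) (i j : ℕ) : ℤ[X] :=
  if i + j ≤ d then (n - i).choose j • (X ^ j * g (i + j))
  else if i + j = d + 1 then ((n - i).choose (d - i) / (d + 1 - i)) • X ^ (d - i)
  else if i + j = n then X ^ (d + 1 - i)
  else 0

namespace IsSteinerMatroid

variable {α : Type} [Fintype α] {P Z : Matroid α → ℤ[X]} {M : Matroid α}
  {Blocks : Set (Set α)} {d n : ℕ} {S : Set α}

lemma P_contract_eq_zero_of_notMem (h : IsSteinerMatroid M Blocks d n) (hn : d + 2 ≤ n)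
    (hPZ : PZaxioms P Z) {U : Set α} (hU : U ⊆ M.E) (hUd : d + 1 ≤ U.ncard) (hUn : U.ncard < n)
    (hUB : U ∉ Blocks) : P (contract M U) = 0 := by
  refine hPZ.P_contract_eq_zero hU (fun hE ↦ ?_)
    (by rw [h.rk_eq_of_notMem hU hUd hUB, h.rank_eq hn])
  rw [hE, h.isSteinerSystem.ncard_eq] at hUn
  exact hUn.false

lemma Z_contract_eq_of_mem (h : IsSteinerMatroid M Blocks d n) (hn : d + 2 ≤ n)
    (hPZ : PZaxioms P Z) {Bl : Set α} (hBl : Bl ∈ Blocks) :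
    Z (contract M Bl) = P (contract M Bl) + X := by
  classical
  have hsys := h.isSteinerSystem
  have hBlE := hsys.subset_of_mem Bl hBl
  have htop : ∅ ≠ (M.E \ Bl).toFinite.toFinset := by
    rw [ne_comm, ← Finset.nonempty_iff_ne_empty, Set.Finite.toFinset_nonempty, ← Set.ncard_pos,
      Set.ncard_sdiff hBlE, hsys.ncard_eq, hsys.ncard_of_mem Bl hBl]
    omega
  rw [hPZ.Z_contract, Finset.sum_eq_add_of_mem ∅ _ (Finset.empty_mem_powerset _)
    (Finset.mem_powerset_self _) htop]
  · rw [Set.Finite.coe_toFinset, Set.union_sdiff_cancel hBlE, ← rank_def, h.rank_eq hn,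
      hPZ.P_contract_ground]
    simp [h.rk_eq_of_mem hn hBl]
  · intro T hT ⟨hT0, hTtop⟩
    rw [Finset.mem_powerset, ← Finset.coe_subset, Set.Finite.coe_toFinset] at hT
    have hcard : (Bl ∪ T).ncard = d + 1 + T.card := by
      rw [Set.ncard_union_eq (Set.disjoint_of_subset_right hT Set.disjoint_sdiff_right),
        hsys.ncard_of_mem Bl hBl, Set.ncard_coe_finset]
    have hT1 := Finset.card_pos.mpr (Finset.nonempty_iff_ne_empty.mpr hT0)
    have hUB : Bl ∪ ↑T ∉ Blocks := fun hU ↦ by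
      have := hsys.ncard_of_mem _ hU
      omega
    have hUE : Bl ∪ T ⊆ M.E := Set.union_subset hBlE (hT.trans Set.sdiff_subset)
    have hUn : (Bl ∪ T).ncard < n := by
      refine (Set.ncard_lt_ncard (hUE.ssubset_of_ne fun hE ↦ hTtop ?_)).trans_eq hsys.ncard_eq
      rw [← Finset.coe_inj, Set.Finite.coe_toFinset, ← hE, Set.union_sdiff_left,
        (Set.subset_sdiff.mp hT).2.sdiff_eq_left]
    rw [h.P_contract_eq_zero_of_notMem hn hPZ hUE (by omega) hUn hUB, mul_zero]

lemma P_contract_eq_one_of_mem (h : IsSteinerMatroid M Blocks d n) (hn : d + 2 ≤ n)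
    (hPZ : PZaxioms P Z) {Bl : Set α} (hBl : Bl ∈ Blocks) : P (contract M Bl) = 1 := by
  have hBlE := h.isSteinerSystem.subset_of_mem Bl hBl
  have hrank : rank (contract M Bl) = 1 := by
    have := rank_contract_add_rk hBlE
    rw [h.rk_eq_of_mem hn hBl, h.rank_eq hn] at this
    omega
  refine hPZ.P_eq_of_Z_eq_add (h.Z_contract_eq_of_mem hn hPZ hBl) (by rw [hrank]; simp) ?_
  rw [hrank]
  simp [reflect_add, add_comm]

lemma sum_powersetCard_eq_steinerZTerm (h : IsSteinerMatroid M Blocks d n) (hn : d + 2 ≤ n)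
    (hPZ : PZaxioms P Z) (hS : S ⊆ M.E) (hSd : S.ncard ≤ d) {g : ℕ → ℤ[X]}
    (hg : ∀ U ⊆ M.E, S.ncard < U.ncard → U.ncard ≤ d → P (contract M U) = g U.ncard)
    {j : ℕ} (hj : 0 < j) (hjn : S.ncard + j ≤ n) :
    ∑ T ∈ (M.E \ S).toFinite.toFinset.powersetCard j,
      X ^ (rk M (S ∪ T) - rk M S) * P (contract M (S ∪ T)) = steinerZTerm d n g S.ncard j := by
  classical
  have hsys := h.isSteinerSystem
  have hrkS := h.rk_eq_ncard_of_ncard_le hn hS hSd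
  have hcardE := hsys.card_toFinset_sdiff hS
  unfold steinerZTerm
  split_ifs with hjd hjd' hjn'
  · rw [← hcardE, ← Finset.card_powersetCard, ← Finset.sum_const]
    refine Finset.sum_congr rfl fun T hT ↦ ?_
    have hU := ncard_union_of_mem_powersetCard hT
    have hUE := union_subset_of_mem_powersetCard hS hT
    rw [h.rk_eq_ncard_of_ncard_le hn hUE (by omega), hU, hrkS, Nat.add_sub_cancel_left,
      hg _ hUE (by omega) (by omega), hU]
  · obtain rfl : j = d + 1 - S.ncard := by omega
    have hcount := hsys.card_filter_union_mem_mul hS hSd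
    rw [show d + 1 - S.ncard = d - S.ncard + 1 by omega, Nat.choose_succ_self_right,
      ← show d + 1 - S.ncard = d - S.ncard + 1 by omega] at hcount
    rw [Nat.div_eq_of_eq_mul_left (by omega) hcount.symm, ← Finset.sum_const, Finset.sum_filter]
    refine Finset.sum_congr rfl fun T hT ↦ ?_
    split_ifs with hB
    · rw [h.rk_eq_of_mem hn hB, hrkS, h.P_contract_eq_one_of_mem hn hPZ hB, mul_one]
    · rw [h.P_contract_eq_zero_of_notMem hn hPZ (union_subset_of_mem_powersetCard hS hT)
        (by rw [ncard_union_of_mem_powersetCard hT]; omega)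
        (by rw [ncard_union_of_mem_powersetCard hT]; omega) hB, mul_zero]
  · obtain rfl : j = n - S.ncard := by omega
    rw [← hcardE, Finset.powersetCard_self, Finset.sum_singleton, Set.Finite.coe_toFinset,
      Set.union_sdiff_cancel hS, ← rank_def, h.rank_eq hn, hrkS, hPZ.P_contract_ground, mul_one]
  · refine Finset.sum_eq_zero fun T hT ↦ ?_
    have hU := ncard_union_of_mem_powersetCard hT
    have hB : S ∪ ↑T ∉ Blocks := fun hB ↦ by
      have := hsys.ncard_of_mem _ hB
      omega
    rw [h.P_contract_eq_zero_of_notMem hn hPZ (union_subset_of_mem_powersetCard hS hT)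
      (by omega) (by omega) hB, mul_zero]

lemma Z_contract_eq (h : IsSteinerMatroid M Blocks d n) (hn : d + 2 ≤ n) (hPZ : PZaxioms P Z)
    (hS : S ⊆ M.E) (hSd : S.ncard ≤ d) {g : ℕ → ℤ[X]}
    (hg : ∀ U ⊆ M.E, S.ncard < U.ncard → U.ncard ≤ d → P (contract M U) = g U.ncard) :
    Z (contract M S) =
      P (contract M S) + ∑ j ∈ Finset.range (n - S.ncard), steinerZTerm d n g S.ncard (j + 1) := by
  rw [hPZ.Z_contract, Finset.sum_powerset, h.isSteinerSystem.card_toFinset_sdiff hS,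
    Finset.sum_range_succ', Finset.powersetCard_zero, Finset.sum_singleton, add_comm]
  simp only [Finset.coe_empty, Set.union_empty, Nat.sub_self, pow_zero, one_mul]
  congr 1
  refine Finset.sum_congr rfl fun j hj ↦ ?_
  rw [Finset.mem_range] at hj
  exact h.sum_powersetCard_eq_steinerZTerm hn hPZ hS hSd hg j.succ_pos (by omega)

end IsSteinerMatroid

/-- `steinerKL i` is `P (M ⧸ S)` for `|S| = i ≤ 5` in the matroid of a Steiner system of
type `(5, 6, 12)`, and `steinerZ i` is `Z (M ⧸ S)`. -/
noncomputable def steinerKL : ℕ → ℤ[X]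
  | 0 => 1 + C 120 * X + C 429 * X ^ 2
  | 1 => 1 + C 55 * X + C 55 * X ^ 2
  | 2 => 1 + C 20 * X
  | 3 => 1 + C 3 * X
  | 4 => 1
  | _ => 0

noncomputable def steinerZ : ℕ → ℤ[X]
  | 0 => 1 + C 132 * X + C 1155 * X ^ 2 + C 2200 * X ^ 3 + C 1155 * X ^ 4 + C 132 * X ^ 5 + X ^ 6
  | 1 => 1 + C 66 * X + C 330 * X ^ 2 + C 330 * X ^ 3 + C 66 * X ^ 4 + X ^ 5
  | 2 => 1 + C 30 * X + C 75 * X ^ 2 + C 30 * X ^ 3 + X ^ 4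
  | 3 => 1 + C 12 * X + C 12 * X ^ 2 + X ^ 3
  | 4 => 1 + C 4 * X + X ^ 2
  | _ => 1 + X

lemma natDegree_steinerKL {i : ℕ} (hi : i ≤ 5) : 2 * (steinerKL i).natDegree < 6 - i := by
  suffices (steinerKL i).natDegree ≤ (5 - i) / 2 by omega
  interval_cases i <;> simp only [steinerKL] <;> compute_degree!

lemma steinerKL_add_sum_steinerZTerm {i : ℕ} (hi : i ≤ 5) :
    steinerKL i + ∑ j ∈ Finset.range (12 - i), steinerZTerm 5 12 steinerKL i (j + 1) =
      steinerZ i := by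
  interval_cases i <;>
    simp [Finset.sum_range_succ, steinerZTerm, steinerKL, steinerZ, Nat.choose] <;> ring

lemma reflect_steinerZ {i : ℕ} (hi : i ≤ 5) : reflect (6 - i) (steinerZ i) = steinerZ i := by
  have reflect_X (N : ℕ) : reflect N (X : ℤ[X]) = X ^ revAt N 1 := by
    simpa using reflect_monomial (R := ℤ) N 1
  interval_cases i <;>
    simp only [steinerZ, reflect_add, reflect_C_mul, reflect_monomial, reflect_one, reflect_X] <;>
    simp [revAt_le] <;> ring

namespace IsSteinerMatroid

variable {α : Type} [Fintype α] {P Z : Matroid α → ℤ[X]} {M : Matroid α}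
  {Blocks : Set (Set α)} {S : Set α}

theorem P_contract_eq_steinerKL (h : IsSteinerMatroid M Blocks 5 12) (hPZ : PZaxioms P Z)
    (hS : S ⊆ M.E) (hS5 : S.ncard ≤ 5) : P (contract M S) = steinerKL S.ncard := by
  obtain ⟨m, hm⟩ : ∃ m, m = 5 - S.ncard := ⟨_, rfl⟩
  induction m using Nat.strong_induction_on generalizing S with
  | _ m ih =>
  have hrank : rank (contract M S) = 6 - S.ncard := by
    have := rank_contract_add_rk hS
    rw [h.rk_eq_ncard_of_ncard_le (by norm_num) hS hS5, h.rank_eq (by norm_num)] at this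
    omega
  refine hPZ.P_eq_of_Z_eq_add (h.Z_contract_eq (by norm_num) hPZ hS hS5
    fun U hU hSU hU5 ↦ ih (5 - U.ncard) (by omega) hU hU5 rfl) ?_ ?_
  · rw [hrank]
    exact natDegree_steinerKL hS5
  · rw [hrank, steinerKL_add_sum_steinerZTerm hS5]
    exact reflect_steinerZ hS5

end IsSteinerMatroid

/-- Let `(E, ℋ)` be a Steiner system of type `(5,6,12)`: `|E| = 12`,
every block `Bl ∈ ℋ` is a `6`-element subset of `E`, and every `5`-element subset of
`E` is contained in exactly one block.  Let `M` be its associated matroid of rank `6`,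
whose bases are the `6`-element subsets of `E` contained in no block.  Then
`P_M(t) = 1 + 120t + 429t²`. -/
theorem steiner_5_6_12_KL_polynomial {β : Type} [Fintype β]
    (P Z : Matroid β → Polynomial ℤ) (hPZ : PZaxioms P Z)
    (E : Set β) (Blocks : Set (Set β))
    (hEcard : E.ncard = 12)
    (hBlocks : ∀ Bl ∈ Blocks, Bl ⊆ E ∧ Bl.ncard = 6)
    (hSteiner : ∀ D ⊆ E, D.ncard = 5 → ∃! Bl, Bl ∈ Blocks ∧ D ⊆ Bl)
    (M : Matroid β) (hME : M.E = E)
    (hMB : ∀ B : Set β, M.IsBase B ↔ B ⊆ E ∧ B.ncard = 6 ∧ ∀ Bl ∈ Blocks, ¬B ⊆ Bl) :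
    P M = 1 + C 120 * X + C 429 * X ^ 2 := by
  subst hME
  have h : IsSteinerMatroid M Blocks 5 12 :=
    ⟨⟨hEcard, fun Bl hBl ↦ (hBlocks Bl hBl).1, fun Bl hBl ↦ (hBlocks Bl hBl).2, hSteiner⟩, hMB⟩
  have hP := h.P_contract_eq_steinerKL hPZ (Set.empty_subset _) (by simp)
  rwa [contract_eq_contract, Matroid.contract_empty, Set.ncard_empty] at hP

end KLPaper
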